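/- arXiv:2304.05289 — 2 statements merged into one kernel-verified Lean document; each statement's English description precedes it below -/
import Mathlib

section
/- There exists $T_0 \in \mathbb{N}$ with the following property. Let $l, \sigma > 0$ with $l/\sigma \geq T_0$ and let $(P_j)_{j \geq 1}$ be a Caccioppoli partition of the cuboid $S^l_\sigma(x_0) := x_0 + (-l,l) \times (-\sigma/2, \sigma/2)^{d-1}$ such that $\mathcal{H}^{d-1}(\bigcup_{j \geq 1} \partial^* P_j \cap S^l_\sigma(x_0)) < \sigma^{d-1}$ and $\mathcal{L}^d(P_1) \geq \mathcal{L}^d(P_j)$ for all $j \geq 2$. Then $\mathcal{L}^d(S^l_\sigma(x_0) \setminus P_1) \leq C_{\rm iso}\, \sigma\, \mathcal{H}^{d-1}(\partial^* P_1 \cap S^l_\sigma(x_0))$ and $\mathcal{L}^d(P_1) > \tfrac{1}{2} \mathcal{L}^d(S^l_\sigma(x_0))$. -/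
open MeasureTheory Metric Filter Set
open scoped ENNReal Topology

noncomputable section

/-- `P` has density `t` at `x` (with respect to Lebesgue measure). -/
def hasDensity {d : ℕ} (P : Set (EuclideanSpace ℝ (Fin d))) (x : EuclideanSpace ℝ (Fin d))
    (t : ℝ≥0∞) : Prop :=
  Tendsto (fun r : ℝ => volume (P ∩ Metric.ball x r) / volume (Metric.ball x r)) (𝓝[>] 0) (𝓝 t)

/-- The essential (measure-theoretic) boundary of a set. -/
def essentialBoundary {d : ℕ} (P : Set (EuclideanSpace ℝ (Fin d))) :
    Set (EuclideanSpace ℝ (Fin d)) :=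
  {x | ¬ hasDensity P x 0 ∧ ¬ hasDensity P x 1}

/-- The long cuboid `S^l_σ(x₀) = x₀ + (-l,l) × (-σ/2,σ/2)^{d-1}`. -/
def longCuboid {d : ℕ} (l σ : ℝ) (x₀ : EuclideanSpace ℝ (Fin (d + 1))) :
    Set (EuclideanSpace ℝ (Fin (d + 1))) :=
  {x | |x 0 - x₀ 0| < l ∧ ∀ i : Fin (d + 1), i ≠ 0 → |x i - x₀ i| < σ / 2}

/-- A Caccioppoli partition of an open set `U`: countably many sets of finite perimeter,
pairwise disjoint up to null sets, covering `U` up to a null set, with finite total perimeter. -/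
def IsCaccioppoliPartition {d : ℕ} (U : Set (EuclideanSpace ℝ (Fin (d + 1))))
    (P : ℕ → Set (EuclideanSpace ℝ (Fin (d + 1)))) : Prop :=
  (∀ j, P j ⊆ U) ∧
  (Pairwise fun i j => volume (P i ∩ P j) = 0) ∧
  volume (U \ ⋃ j, P j) = 0 ∧
  (∑' j, μH[(d : ℝ)] (essentialBoundary (P j) ∩ U)) < ⊤

/-! The partial unions `A n = P 0 ∪ ⋯ ∪ P n` have essential boundary inside that of the
partition, so the isoperimetric inequality gives `min |A n| |S \ A n| ≤ C := Ciso σ · σ^d`,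
while `3 C < |S|` once `l / σ` is large. If `|P 0| ≤ C`, then every `|P j| ≤ C`, and `|A n|`
can never exceed `C`: at the first index where it did, `|S \ A n| ≤ C` would give
`|S| ≤ |A (n-1)| + |P n| + |S \ A n| ≤ 3 C`. Then `|S| = |⋃ A n| ≤ C`, which is absurd; hence
`C < |P 0|` and the isoperimetric inequality for `P 0` bounds the complement instead. -/

section Density

variable {d : ℕ} {A B : Set (EuclideanSpace ℝ (Fin d))} {x : EuclideanSpace ℝ (Fin d)}

lemma hasDensity_one_mono (hAB : A ⊆ B) (hA : hasDensity A x 1) : hasDensity B x 1 :=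
  tendsto_of_tendsto_of_tendsto_of_le_of_le hA tendsto_const_nhds
    (fun _ => ENNReal.div_le_div_right (measure_mono (inter_subset_inter_left _ hAB)) _)
    (fun _ => (ENNReal.div_le_div_right (measure_mono inter_subset_right) _).trans
      ENNReal.div_self_le_one)

lemma hasDensity_union_zero (hA : hasDensity A x 0) (hB : hasDensity B x 0) :
    hasDensity (A ∪ B) x 0 := by
  have hAB : Tendsto (fun r : ℝ => volume (A ∩ ball x r) / volume (ball x r) +
      volume (B ∩ ball x r) / volume (ball x r)) (𝓝[>] 0) (𝓝 0) := by
    simpa using hA.add hB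
  refine tendsto_of_tendsto_of_tendsto_of_le_of_le tendsto_const_nhds hAB
    (fun _ => zero_le) (fun r => ?_)
  rw [ENNReal.div_add_div_same, union_inter_distrib_right]
  exact ENNReal.div_le_div_right (measure_union_le _ _) _

lemma essentialBoundary_union_subset :
    essentialBoundary (A ∪ B) ⊆ essentialBoundary A ∪ essentialBoundary B := by
  rintro x ⟨hnot0, hnot1⟩
  by_contra hx
  simp only [mem_union, essentialBoundary, mem_ofPred_eq, not_or, not_and_or, not_not] at hx
  obtain ⟨hA0 | hA1, hB0 | hB1⟩ := hx
  · exact hnot0 (hasDensity_union_zero hA0 hB0)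
  · exact hnot1 (hasDensity_one_mono subset_union_right hB1)
  all_goals exact hnot1 (hasDensity_one_mono subset_union_left hA1)

lemma essentialBoundary_partialSups_subset (P : ℕ → Set (EuclideanSpace ℝ (Fin d))) (n : ℕ) :
    essentialBoundary (partialSups P n) ⊆ ⋃ j, essentialBoundary (P j) := by
  induction n with
  | zero => simpa using subset_iUnion (fun j => essentialBoundary (P j)) 0
  | succ n ih =>
    rw [← Order.succ_eq_add_one, partialSups_succ]
    exact essentialBoundary_union_subset.trans
      (union_subset ih (subset_iUnion (fun j => essentialBoundary (P j)) (n + 1)))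

end Density

lemma longCuboid_eq_preimage_pi {d : ℕ} (l σ : ℝ) (x₀ : EuclideanSpace ℝ (Fin (d + 1))) :
    longCuboid l σ x₀ = (MeasurableEquiv.toLp 2 (Fin (d + 1) → ℝ)).symm ⁻¹'
      univ.pi fun i => Ioo (x₀ i - (Fin.cons l fun _ => σ / 2 : Fin (d + 1) → ℝ) i)
        (x₀ i + (Fin.cons l fun _ => σ / 2 : Fin (d + 1) → ℝ) i) := by
  ext x
  simp [longCuboid, Fin.forall_fin_succ, abs_sub_lt_iff, sub_lt_iff_lt_add, add_comm, and_comm]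

lemma volume_longCuboid {d : ℕ} (l : ℝ) {σ : ℝ} (hσ : 0 ≤ σ)
    (x₀ : EuclideanSpace ℝ (Fin (d + 1))) :
    volume (longCuboid l σ x₀) = ENNReal.ofReal (2 * l) * ENNReal.ofReal (σ ^ d) := by
  rw [longCuboid_eq_preimage_pi,
    (EuclideanSpace.volume_preserving_symm_measurableEquiv_toLp (Fin (d + 1))).measure_preimage
      (MeasurableSet.univ_pi fun _ => measurableSet_Ioo).nullMeasurableSet,
    volume_pi_pi, Fin.prod_univ_succ, ENNReal.ofReal_pow hσ]
  simp only [Real.volume_Ioo, Fin.cons_zero, Fin.cons_succ, add_sub_sub_cancel, add_halves,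
    Finset.prod_const, Finset.card_univ, Fintype.card_fin, two_mul]

lemma three_mul_lt_volume_longCuboid {d : ℕ} {l σ c : ℝ} (hl : 0 < l) (hσ : 0 < σ)
    (hc : 3 * c < 2 * l) (x₀ : EuclideanSpace ℝ (Fin (d + 1))) :
    3 * (ENNReal.ofReal c * ENNReal.ofReal (σ ^ d)) < volume (longCuboid l σ x₀) := by
  rw [volume_longCuboid l hσ.le, ← mul_assoc]
  refine ENNReal.mul_lt_mul_left (by simpa using pow_pos hσ d) ENNReal.ofReal_ne_top ?_
  rw [← ENNReal.ofReal_ofNat 3, ← ENNReal.ofReal_mul (by norm_num)]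
  exact (ENNReal.ofReal_lt_ofReal_iff (by positivity)).mpr hc

section Dominant

variable {α : Type*} [MeasurableSpace α] {μ : Measure α} {S : Set α} {P : ℕ → Set α} {C : ℝ≥0∞}

lemma measure_le_add_measure_sdiff (s t : Set α) : μ s ≤ μ t + μ (s \ t) :=
  (measure_le_inter_add_sdiff μ s t).trans (by gcongr; exact inter_subset_right)

lemma measure_partialSups_le_of_measure_le (hS : 3 * C < μ S)
    (hmin : ∀ n, min (μ (partialSups P n)) (μ (S \ partialSups P n)) ≤ C)
    (hmax : ∀ j, μ (P j) ≤ μ (P 0)) (hP₀ : μ (P 0) ≤ C) (n : ℕ) :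
    μ (partialSups P n) ≤ C := by
  induction n with
  | zero => simpa using hP₀
  | succ n ih =>
    refine (min_le_iff.mp (hmin (n + 1))).resolve_right fun hsdiff => hS.not_ge ?_
    calc μ S ≤ μ (partialSups P (n + 1)) + C :=
          (measure_le_add_measure_sdiff _ _).trans (add_le_add_right hsdiff _)
      _ ≤ μ (partialSups P n) + μ (P (n + 1)) + C := by
        rw [← Order.succ_eq_add_one, partialSups_succ]
        gcongr
        exact measure_union_le _ _
      _ ≤ C + C + C := by gcongr; exact (hmax _).trans hP₀
      _ = 3 * C := by ring

lemma lt_measure_zero_and_measure_sdiff_le (hsub : ∀ j, P j ⊆ S) (hcover : μ (S \ ⋃ j, P j) = 0)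
    (hS : 3 * C < μ S) (hmin : ∀ n, min (μ (partialSups P n)) (μ (S \ partialSups P n)) ≤ C)
    (hmax : ∀ j, μ (P j) ≤ μ (P 0)) :
    C < μ (P 0) ∧ μ (S \ P 0) ≤ C := by
  have hP₀ : C < μ (P 0) := by
    by_contra! hP₀
    have hunion : μ (⋃ j, P j) ≤ C := by
      rw [← show ⋃ n, partialSups P n = ⋃ j, P j from iSup_partialSups_eq P,
        (partialSups_monotone P).measure_iUnion]
      exact iSup_le (measure_partialSups_le_of_measure_le hS hmin hmax hP₀)
    rw [measure_eq_measure_of_null_sdiff (iUnion_subset hsub) hcover] at hunion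
    exact hS.not_ge (hunion.trans (le_mul_of_one_le_left zero_le (by norm_num)))
  refine ⟨hP₀, (min_le_iff.mp (hmin 0)).resolve_left ?_⟩
  simpa using hP₀.not_ge

lemma half_measure_lt_of_measure_sdiff_lt {A : Set α} (hA : μ A ≠ ⊤) (h : μ (S \ A) < μ A) :
    (1 / 2 : ℝ≥0∞) * μ S < μ A := by
  rw [one_div, ← ENNReal.div_eq_inv_mul, ENNReal.div_lt_iff (by norm_num) (by norm_num), mul_two]
  exact (measure_le_add_measure_sdiff S A).trans_lt (ENNReal.add_lt_add_left hA h)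

end Dominant

theorem dominant_component_one_general (d : ℕ) (Ciso : ℝ)
    (hiso : ∀ (l σ : ℝ) (x₀ : EuclideanSpace ℝ (Fin (d + 1))),
      0 < l → 0 < σ → 1 ≤ l / σ →
      ∀ P : Set (EuclideanSpace ℝ (Fin (d + 1))),
        P ⊆ longCuboid l σ x₀ →
        μH[(d : ℝ)] (essentialBoundary P ∩ longCuboid l σ x₀) < ENNReal.ofReal (σ ^ d) →
        min (volume P) (volume (longCuboid l σ x₀ \ P)) ≤
          ENNReal.ofReal (Ciso * σ) * μH[(d : ℝ)] (essentialBoundary P ∩ longCuboid l σ x₀)) :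
    ∃ T₀ : ℕ, 0 < T₀ ∧
      ∀ (l σ : ℝ) (x₀ : EuclideanSpace ℝ (Fin (d + 1)))
        (P : ℕ → Set (EuclideanSpace ℝ (Fin (d + 1)))),
        0 < l → 0 < σ → (T₀ : ℝ) ≤ l / σ →
        IsCaccioppoliPartition (longCuboid l σ x₀) P →
        μH[(d : ℝ)] ((⋃ j, essentialBoundary (P j)) ∩ longCuboid l σ x₀) <
          ENNReal.ofReal (σ ^ d) →
        (∀ j, volume (P j) ≤ volume (P 0)) →
        volume (longCuboid l σ x₀ \ P 0) ≤
            ENNReal.ofReal (Ciso * σ) *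
              μH[(d : ℝ)] (essentialBoundary (P 0) ∩ longCuboid l σ x₀) ∧
          (1 / 2 : ℝ≥0∞) * volume (longCuboid l σ x₀) < volume (P 0) := by
  refine ⟨2 * ⌈Ciso⌉₊ + 1, by omega, fun l σ x₀ P hl hσ hT hpart hper hmax => ?_⟩
  obtain ⟨hsub, -, hcover, -⟩ := hpart
  set S := longCuboid l σ x₀
  have hlσ : ((2 * ⌈Ciso⌉₊ + 1 : ℕ) : ℝ) * σ ≤ l := (le_div_iff₀ hσ).mp hT
  have hiso_S := hiso l σ x₀ hl hσ (le_trans (by norm_cast; omega) hT)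
  have hper_le : ∀ Q, essentialBoundary Q ⊆ ⋃ j, essentialBoundary (P j) →
      μH[(d : ℝ)] (essentialBoundary Q ∩ S) < ENNReal.ofReal (σ ^ d) :=
    fun Q hQ => (measure_mono (inter_subset_inter_left _ hQ)).trans_lt hper
  have hmin (n : ℕ) : min (volume (partialSups P n)) (volume (S \ partialSups P n)) ≤
      ENNReal.ofReal (Ciso * σ) * ENNReal.ofReal (σ ^ d) := by
    have hbd := hper_le _ (essentialBoundary_partialSups_subset P n)
    exact (hiso_S _ (partialSups_le P n S fun j _ => hsub j) hbd).trans (by gcongr)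
  have hc : 3 * (Ciso * σ) < 2 * l := by
    push_cast at hlσ
    nlinarith [mul_le_mul_of_nonneg_right (Nat.le_ceil Ciso) hσ.le,
      mul_nonneg (Nat.cast_nonneg (α := ℝ) ⌈Ciso⌉₊) hσ.le]
  have hS := three_mul_lt_volume_longCuboid (d := d) hl hσ hc x₀
  obtain ⟨hlt, hle⟩ := lt_measure_zero_and_measure_sdiff_le hsub hcover hS hmin hmax
  have hP₀_ne_top : volume (P 0) ≠ ⊤ := ne_top_of_le_ne_top
    (by simp [S, volume_longCuboid l hσ.le, ENNReal.mul_eq_top]) (measure_mono (hsub 0))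
  refine ⟨?_, half_measure_lt_of_measure_sdiff_lt hP₀_ne_top (hle.trans_lt hlt)⟩
  have hP₀ := hiso_S (P 0) (hsub 0)
    (hper_le _ (subset_iUnion (fun j => essentialBoundary (P j)) 0))
  rwa [min_eq_right (hle.trans hlt.le)] at hP₀

/-- **Dominant component 1.** Given the relative isoperimetric inequality on long cuboids with
constant `Ciso`, there is `T₀ ∈ ℕ` such that any Caccioppoli partition of a cuboid with
`l/σ ≥ T₀` and total relative perimeter less than `σ^{d-1}` has a dominant component. -/
theorem dominant_component_one (d : ℕ) (Ciso : ℝ) (hCiso : 1 ≤ Ciso)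
    (hiso : ∀ (l σ : ℝ) (x₀ : EuclideanSpace ℝ (Fin (d + 1))),
      0 < l → 0 < σ → 1 ≤ l / σ →
      ∀ P : Set (EuclideanSpace ℝ (Fin (d + 1))),
        P ⊆ longCuboid l σ x₀ →
        μH[(d : ℝ)] (essentialBoundary P ∩ longCuboid l σ x₀) < ENNReal.ofReal (σ ^ d) →
        min (volume P) (volume (longCuboid l σ x₀ \ P)) ≤
          ENNReal.ofReal (Ciso * σ) * μH[(d : ℝ)] (essentialBoundary P ∩ longCuboid l σ x₀)) :
    ∃ T₀ : ℕ, 0 < T₀ ∧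
      ∀ (l σ : ℝ) (x₀ : EuclideanSpace ℝ (Fin (d + 1)))
        (P : ℕ → Set (EuclideanSpace ℝ (Fin (d + 1)))),
        0 < l → 0 < σ → (T₀ : ℝ) ≤ l / σ →
        IsCaccioppoliPartition (longCuboid l σ x₀) P →
        μH[(d : ℝ)] ((⋃ j, essentialBoundary (P j)) ∩ longCuboid l σ x₀) <
          ENNReal.ofReal (σ ^ d) →
        (∀ j, volume (P j) ≤ volume (P 0)) →
        volume (longCuboid l σ x₀ \ P 0) ≤
            ENNReal.ofReal (Ciso * σ) *
              μH[(d : ℝ)] (essentialBoundary (P 0) ∩ longCuboid l σ x₀) ∧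
          (1 / 2 : ℝ≥0∞) * volume (longCuboid l σ x₀) < volume (P 0) :=
  dominant_component_one_general d Ciso hiso
end
end

section
/- Let $\delta > 0$. There exists a constant $C > 0$ depending only on $\delta$ such that for every matrix $G \in \mathbb{R}^{3\times 3}$, vector $b \in \mathbb{R}^3$, point $x \in \mathbb{R}^3$, radius $r > 0$, and measurable set $E \subset B_r(x)$ with $\mathcal{L}^3(E) \geq \delta r^3$, the affine map $a(z) := Gz + b$ satisfies $\|a\|_{L^\infty(B_r(x))} \leq C r^{-3}\, \mathcal{L}^3(E)^{1/2}\, \|a\|_{L^2(E)}$ and $|G| \leq C r^{-4}\, \mathcal{L}^3(E)^{1/2}\, \|a\|_{L^2(E)}$. -/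
/-!
A ball of radius `r` meets a slab `{z | |⟪z, u⟫ - s| ≤ t}` in volume `O(t r²)`, so a set `E` of
volume `≥ δ r³` inside the ball keeps half of its volume at distance `≳ δ r` from any affine
plane. Hence every affine function `z ↦ ⟪z, g⟫ + s` satisfies
`∫_E (⟪z, g⟫ + s)² ≳ δ³ r⁵ ‖g‖²`; summing over the rows of `G` bounds `|G|²` by the `L²(E)`
norm of `a`. The sup bound follows by comparing `a` with its value at a point of `E` where `|a|²`
is at most its mean, using that `a` is `|G|`-Lipschitz.
-/

open MeasureTheory Metric Filter Set
open scoped ENNReal Topology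

noncomputable section

/-- The Frobenius norm of a `3×3` real matrix. -/
def frob (G : Matrix (Fin 3) (Fin 3) ℝ) : ℝ :=
  Real.sqrt (∑ i, ∑ j, (G i j) ^ 2)

/-- The affine map `z ↦ G z + b` on `ℝ³`. -/
def affineMap3 (G : Matrix (Fin 3) (Fin 3) ℝ) (b : EuclideanSpace ℝ (Fin 3)) :
    EuclideanSpace ℝ (Fin 3) → EuclideanSpace ℝ (Fin 3) :=
  fun z => (EuclideanSpace.equiv (Fin 3) ℝ).symm (G.mulVec (EuclideanSpace.equiv (Fin 3) ℝ z)) + b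

open Module
open scoped RealInnerProductSpace

theorem Continuous.integrableOn_of_subset_ball {X E : Type*} [MetricSpace X] [ProperSpace X]
    [MeasurableSpace X] [OpensMeasurableSpace X] [NormedAddCommGroup E] {μ : Measure X}
    [IsFiniteMeasureOnCompacts μ] {f : X → E} (hf : Continuous f) {s : Set X} {x : X} {r : ℝ}
    (hs : s ⊆ ball x r) : IntegrableOn f s μ :=
  (hf.continuousOn.integrableOn_compact (isCompact_closedBall x r)).mono_set
    (hs.trans ball_subset_closedBall)

theorem exists_mem_norm_le_inv_mul_sqrt_mul_sqrt_setIntegral {X E : Type*} [MeasurableSpace X]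
    [NormedAddCommGroup E] {μ : Measure X} {f : X → E} {s : Set X} {c : ℝ} (hc : 0 < c)
    (hvol : ENNReal.ofReal c ≤ μ s) (hfin : μ s ≠ ∞)
    (hf : IntegrableOn (fun z => ‖f z‖ ^ 2) s μ) :
    ∃ y ∈ s, ‖f y‖ ≤ c⁻¹ * √(μ.real s) * √(∫ z in s, ‖f z‖ ^ 2 ∂μ) := by
  have hc_le : c ≤ μ.real s := (ENNReal.ofReal_le_iff_le_toReal hfin).mp hvol
  have hpos : 0 < μ.real s := hc.trans_le hc_le
  obtain ⟨y, hy, hmean⟩ := exists_le_setAverage (ENNReal.toReal_pos_iff.mp hpos).1.ne' hfin hf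
  refine ⟨y, hy, (sq_le_sq₀ (norm_nonneg _) (by positivity)).mp ?_⟩
  rw [setAverage_eq, smul_eq_mul] at hmean
  have hQ : 0 ≤ ∫ z in s, ‖f z‖ ^ 2 ∂μ := integral_nonneg fun z => sq_nonneg _
  rw [mul_pow, mul_pow, Real.sq_sqrt hpos.le, Real.sq_sqrt hQ]
  refine hmean.trans (mul_le_mul_of_nonneg_right ?_ hQ)
  have hsq := pow_le_pow_left₀ hc.le hc_le 2
  field_simp
  exact hsq

section Slab

variable {F : Type*} [NormedAddCommGroup F] [InnerProductSpace ℝ F] [FiniteDimensional ℝ F]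
  [MeasurableSpace F] [BorelSpace F]

theorem volume_slab_inter_ball_le {u : F} (hu : ‖u‖ = 1) (s t : ℝ) (x : F) (r : ℝ) :
    volume ({z | |⟪z, u⟫ - s| ≤ t} ∩ ball x r) ≤
      ENNReal.ofReal (2 * t) * ENNReal.ofReal (2 * r) ^ (finrank ℝ F - 1) := by
  classical
  have hunit : Orthonormal ℝ ((↑) : ({u} : Set F) → F) := by
    rw [orthonormal_subtype_iff_ite]
    rintro v rfl w rfl
    simp [hu]
  obtain ⟨S, B, huS, hB⟩ := hunit.exists_orthonormalBasis_extension
  let i₀ : S := ⟨u, huS rfl⟩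
  -- In the coordinates of `B` the slab constrains only the coordinate along `u = B i₀`.
  let I : S → Set ℝ := Function.update (fun i => Icc (B.repr x i - r) (B.repr x i + r)) i₀
    (Icc (s - t) (s + t))
  have hsub : {z | |⟪z, u⟫ - s| ≤ t} ∩ ball x r ⊆ B.repr ⁻¹' (WithLp.ofLp ⁻¹' univ.pi I) := by
    rintro z ⟨hslab : |⟪z, u⟫ - s| ≤ t, hball⟩ i -
    by_cases hi : i = i₀
    · subst hi
      have hcoord : B.repr z i₀ = ⟪z, u⟫ := by
        rw [OrthonormalBasis.repr_apply_apply, hB, real_inner_comm]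
      simp only [I, Function.update_self, mem_Icc, hcoord]
      exact ⟨by linarith [(abs_le.mp hslab).1], by linarith [(abs_le.mp hslab).2]⟩
    · have hcoord : |B.repr z i - B.repr x i| < r := by
        calc |B.repr z i - B.repr x i| = ‖(B.repr z - B.repr x) i‖ := by simp
          _ ≤ ‖B.repr z - B.repr x‖ := PiLp.norm_apply_le _ i
          _ = dist z x := by rw [← map_sub, LinearIsometryEquiv.norm_map, dist_eq_norm]
          _ < r := hball
      simp only [I, Function.update_of_ne hi, mem_Icc]
      constructor <;> linarith [abs_lt.mp hcoord]
  have hbox : MeasurableSet (univ.pi I) :=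
    MeasurableSet.univ_pi fun i => by
      by_cases hi : i = i₀
      · simp only [I, hi, Function.update_self, measurableSet_Icc]
      · simp only [I, Function.update_of_ne hi, measurableSet_Icc]
  have hside : ∀ i ∈ ({i₀}ᶜ : Finset S), volume (I i) = ENNReal.ofReal (2 * r) := by
    intro i hi
    rw [Finset.mem_compl, Finset.mem_singleton] at hi
    simp only [I, Function.update_of_ne hi, Real.volume_Icc]
    ring_nf
  calc volume ({z | |⟪z, u⟫ - s| ≤ t} ∩ ball x r)
      ≤ volume (B.repr ⁻¹' (WithLp.ofLp ⁻¹' univ.pi I)) := measure_mono hsub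
    _ = ∏ i, volume (I i) := by
      rw [B.measurePreserving_repr.measure_preimage
          ((PiLp.volume_preserving_ofLp S).measurable hbox).nullMeasurableSet,
        (PiLp.volume_preserving_ofLp S).measure_preimage hbox.nullMeasurableSet, volume_pi_pi]
    _ = ENNReal.ofReal (2 * t) * ENNReal.ofReal (2 * r) ^ (finrank ℝ F - 1) := by
      rw [Fintype.prod_eq_mul_prod_compl i₀, Finset.prod_congr rfl hside, Finset.prod_const,
        Finset.card_compl, Finset.card_singleton, finrank_eq_card_basis B.toBasis]
      simp only [I, Function.update_self, Real.volume_Icc]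
      ring_nf

theorem le_setIntegral_sq_inner_sub {u : F} (hu : ‖u‖ = 1) (s : ℝ) {x : F} {r δ : ℝ}
    (hr : 0 < r) (hδ : 0 < δ) {E : Set F} (hE : E ⊆ ball x r)
    (hvol : ENNReal.ofReal (δ * r ^ finrank ℝ F) ≤ volume E) :
    δ ^ 3 * r ^ (finrank ℝ F + 2) / 2 ^ (2 * finrank ℝ F + 3) ≤ ∫ z in E, (⟪z, u⟫ - s) ^ 2 := by
  obtain ⟨m, hm⟩ : ∃ m, finrank ℝ F = m + 1 :=
    Nat.exists_eq_add_one.mpr (Module.finrank_pos_iff_exists_ne_zero.mpr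
      ⟨u, norm_ne_zero_iff.mp (by rw [hu]; exact one_ne_zero)⟩)
  rw [hm] at hvol ⊢
  -- With this width the slab meets `E` in at most half of the volume of `E`,
  -- and off the slab the integrand is at least `t²`.
  set t := δ * r / 2 ^ (m + 2) with ht
  set f : F → ℝ := fun z => (⟪z, u⟫ - s) ^ 2
  have hfc : Continuous f := by fun_prop
  have hslab : volume.real ({z | |⟪z, u⟫ - s| ≤ t} ∩ ball x r) ≤ δ * r ^ (m + 1) / 2 := by
    have h := volume_slab_inter_ball_le hu s t x r
    rw [hm, Nat.add_sub_cancel, ← ENNReal.ofReal_pow (by positivity),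
      ← ENNReal.ofReal_mul (by positivity)] at h
    refine (ENNReal.toReal_le_of_le_ofReal (by positivity) h).trans_eq ?_
    rw [ht]; field_simp; ring
  have hcover : E ⊆ {z | t ^ 2 ≤ f z} ∩ E ∪ {z | |⟪z, u⟫ - s| ≤ t} ∩ ball x r := by
    intro z hz
    by_cases h : t ^ 2 ≤ f z
    · exact Or.inl ⟨h, hz⟩
    · exact Or.inr ⟨abs_le_of_sq_le_sq (not_le.mp h).le (by positivity), hE hz⟩
  have hfin : volume E ≠ ∞ := ((measure_mono hE).trans_lt measure_ball_lt_top).ne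
  have hEreal : δ * r ^ (m + 1) ≤ volume.real E :=
    (ENNReal.ofReal_le_iff_le_toReal hfin).mp hvol
  have hlarge : δ * r ^ (m + 1) / 2 ≤ volume.real ({z | t ^ 2 ≤ f z} ∩ E) := by
    have := (measureReal_mono hcover).trans (measureReal_union_le _ _)
    linarith
  have hmarkov : t ^ 2 * volume.real ({z | t ^ 2 ≤ f z} ∩ E) ≤ ∫ z in E, f z := by
    rw [← measureReal_restrict_apply (measurableSet_le measurable_const hfc.measurable)]
    exact mul_meas_ge_le_integral_of_nonneg (.of_forall fun z => sq_nonneg _)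
      (hfc.integrableOn_of_subset_ball hE) _
  calc δ ^ 3 * r ^ (m + 1 + 2) / 2 ^ (2 * (m + 1) + 3) = t ^ 2 * (δ * r ^ (m + 1) / 2) := by
        rw [ht]; field_simp; ring
    _ ≤ ∫ z in E, f z := (mul_le_mul_of_nonneg_left hlarge (sq_nonneg t)).trans hmarkov

theorem sq_norm_mul_le_setIntegral_sq_inner_add (g : F) (s : ℝ) {x : F} {r δ : ℝ}
    (hr : 0 < r) (hδ : 0 < δ) {E : Set F} (hE : E ⊆ ball x r)
    (hvol : ENNReal.ofReal (δ * r ^ finrank ℝ F) ≤ volume E) :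
    ‖g‖ ^ 2 * (δ ^ 3 * r ^ (finrank ℝ F + 2) / 2 ^ (2 * finrank ℝ F + 3)) ≤
      ∫ z in E, (⟪z, g⟫ + s) ^ 2 := by
  rcases eq_or_ne g 0 with rfl | hg
  · rw [norm_zero, zero_pow two_ne_zero, zero_mul]
    exact integral_nonneg fun z => sq_nonneg _
  have hg' : ‖g‖ ≠ 0 := norm_ne_zero_iff.mpr hg
  have hscale : ∀ z, (⟪z, g⟫ + s) ^ 2 = ‖g‖ ^ 2 * (⟪z, ‖g‖⁻¹ • g⟫ - (-s / ‖g‖)) ^ 2 := by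
    intro z
    rw [real_inner_smul_right]
    field_simp
    ring
  simp_rw [hscale, integral_const_mul]
  gcongr
  exact le_setIntegral_sq_inner_sub (norm_smul_inv_norm hg) _ hr hδ hE hvol

end Slab

def Matrix.euclideanRow {m n : Type*} (G : Matrix m n ℝ) (i : m) : EuclideanSpace ℝ n :=
  WithLp.toLp 2 (G i)

section AffineMap3

variable (G : Matrix (Fin 3) (Fin 3) ℝ) (b : EuclideanSpace ℝ (Fin 3))

theorem frob_nonneg : 0 ≤ frob G := Real.sqrt_nonneg _

theorem frob_sq : frob G ^ 2 = ∑ i, ‖G.euclideanRow i‖ ^ 2 := by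
  rw [frob, Real.sq_sqrt (by positivity)]
  simp [EuclideanSpace.norm_sq_eq, Matrix.euclideanRow]

theorem affineMap3_apply (z : EuclideanSpace ℝ (Fin 3)) (i : Fin 3) :
    affineMap3 G b z i = ⟪z, G.euclideanRow i⟫ + b i := by
  simp [affineMap3, Matrix.euclideanRow, Matrix.mulVec, dotProduct, PiLp.inner_apply]

theorem continuous_affineMap3 : Continuous (affineMap3 G b) := by
  unfold affineMap3
  fun_prop

theorem norm_affineMap3_sq (z : EuclideanSpace ℝ (Fin 3)) :
    ‖affineMap3 G b z‖ ^ 2 = ∑ i, (⟪z, G.euclideanRow i⟫ + b i) ^ 2 := by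
  simp [EuclideanSpace.norm_sq_eq, affineMap3_apply]

theorem affineMap3_sub (z w : EuclideanSpace ℝ (Fin 3)) :
    affineMap3 G b z - affineMap3 G b w = affineMap3 G 0 (z - w) := by
  simp [affineMap3, Matrix.mulVec_sub]

theorem norm_affineMap3_sub_le (z w : EuclideanSpace ℝ (Fin 3)) :
    ‖affineMap3 G b z - affineMap3 G b w‖ ≤ frob G * ‖z - w‖ := by
  rw [affineMap3_sub]
  refine (sq_le_sq₀ (norm_nonneg _) (mul_nonneg (frob_nonneg G) (norm_nonneg _))).mp ?_
  rw [norm_affineMap3_sq, mul_pow, frob_sq, Finset.sum_mul]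
  refine Finset.sum_le_sum fun i _ => ?_
  simp only [PiLp.zero_apply, add_zero, ← mul_pow, mul_comm ‖G.euclideanRow i‖]
  exact sq_le_sq' (neg_le_of_abs_le (abs_real_inner_le_norm _ _))
    (le_of_abs_le (abs_real_inner_le_norm _ _))

theorem sq_frob_mul_le_setIntegral {x : EuclideanSpace ℝ (Fin 3)} {r δ : ℝ} (hr : 0 < r)
    (hδ : 0 < δ) {E : Set (EuclideanSpace ℝ (Fin 3))} (hE : E ⊆ ball x r)
    (hvol : ENNReal.ofReal (δ * r ^ 3) ≤ volume E) :
    frob G ^ 2 * (δ ^ 3 * r ^ 5 / 512) ≤ ∫ z in E, ‖affineMap3 G b z‖ ^ 2 := by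
  simp_rw [norm_affineMap3_sq]
  rw [integral_finsetSum _ fun i _ => (by fun_prop : Continuous fun z =>
      (⟪z, G.euclideanRow i⟫ + b i) ^ 2).integrableOn_of_subset_ball hE,
    frob_sq, Finset.sum_mul]
  refine Finset.sum_le_sum fun i _ => ?_
  have h := sq_norm_mul_le_setIntegral_sq_inner_add (G.euclideanRow i) (b i) hr hδ hE
    (by rwa [finrank_euclideanSpace_fin])
  rw [finrank_euclideanSpace_fin] at h
  norm_num at h
  exact h

theorem frob_le_of_subset_ball {x : EuclideanSpace ℝ (Fin 3)} {r δ : ℝ} (hr : 0 < r)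
    (hδ : 0 < δ) {E : Set (EuclideanSpace ℝ (Fin 3))} (hE : E ⊆ ball x r)
    (hvol : ENNReal.ofReal (δ * r ^ 3) ≤ volume E) :
    frob G ≤ 32 / δ ^ 2 * r⁻¹ ^ 4 * √(volume.real E) *
      √(∫ z in E, ‖affineMap3 G b z‖ ^ 2) := by
  have h := sq_frob_mul_le_setIntegral G b hr hδ hE hvol
  have hV : δ * r ^ 3 ≤ volume.real E :=
    (ENNReal.ofReal_le_iff_le_toReal ((measure_mono hE).trans_lt measure_ball_lt_top).ne).mp hvol
  have hQ : 0 ≤ ∫ z in E, ‖affineMap3 G b z‖ ^ 2 := integral_nonneg fun z => sq_nonneg _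
  refine (sq_le_sq₀ (frob_nonneg G) (by positivity)).mp ?_
  rw [mul_pow, mul_pow, mul_pow, Real.sq_sqrt (by positivity), Real.sq_sqrt hQ]
  field_simp
  nlinarith [mul_le_mul h hV (by positivity) hQ, mul_nonneg hQ (measureReal_nonneg (μ := volume) (s := E))]

theorem norm_affineMap3_le_of_mem_ball {x z w : EuclideanSpace ℝ (Fin 3)} {r : ℝ}
    (hz : z ∈ ball x r) (hw : w ∈ ball x r) :
    ‖affineMap3 G b z‖ ≤ ‖affineMap3 G b w‖ + frob G * (2 * r) := by
  have hzw : ‖z - w‖ ≤ 2 * r := by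
    rw [← dist_eq_norm]
    linarith [dist_triangle_right z w x, mem_ball.mp hz, mem_ball.mp hw]
  calc ‖affineMap3 G b z‖ ≤ ‖affineMap3 G b w‖ + ‖affineMap3 G b z - affineMap3 G b w‖ :=
        norm_le_norm_add_norm_sub' _ _
    _ ≤ ‖affineMap3 G b w‖ + frob G * (2 * r) := by
        gcongr
        exact (norm_affineMap3_sub_le G b z w).trans (by gcongr; exact frob_nonneg G)

end AffineMap3

/-- **Estimate on affine maps.** -/
theorem estimate_on_affine_maps (δ : ℝ) (hδ : 0 < δ) :
    ∃ C : ℝ, 0 < C ∧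
      ∀ (G : Matrix (Fin 3) (Fin 3) ℝ) (b x : EuclideanSpace ℝ (Fin 3)) (r : ℝ)
        (E : Set (EuclideanSpace ℝ (Fin 3))),
        0 < r → MeasurableSet E → E ⊆ Metric.ball x r →
        ENNReal.ofReal (δ * r ^ 3) ≤ volume E →
        (∀ z ∈ Metric.ball x r,
            ‖affineMap3 G b z‖ ≤
              C * r⁻¹ ^ 3 * (volume E).toReal ^ (1 / 2 : ℝ) *
                Real.sqrt (∫ w in E, ‖affineMap3 G b w‖ ^ 2)) ∧
          frob G ≤
            C * r⁻¹ ^ 4 * (volume E).toReal ^ (1 / 2 : ℝ) *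
              Real.sqrt (∫ w in E, ‖affineMap3 G b w‖ ^ 2) := by
  refine ⟨64 / δ ^ 2 + 1 / δ, by positivity, ?_⟩
  intro G b x r E hr _ hE hvol
  have hfin : volume E ≠ ∞ := ((measure_mono hE).trans_lt measure_ball_lt_top).ne
  obtain ⟨z₀, hz₀, ha₀⟩ := exists_mem_norm_le_inv_mul_sqrt_mul_sqrt_setIntegral (by positivity)
    hvol hfin ((continuous_affineMap3 G b).norm.pow 2 |>.integrableOn_of_subset_ball hE)
  have hfrob := frob_le_of_subset_ball G b hr hδ hE hvol
  rw [← Real.sqrt_eq_rpow, ← measureReal_def]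
  rw [mul_inv, ← inv_pow] at ha₀
  set V := volume.real E
  set Q := ∫ w in E, ‖affineMap3 G b w‖ ^ 2
  refine ⟨fun z hz => ?_, hfrob.trans ?_⟩
  · calc ‖affineMap3 G b z‖ ≤ ‖affineMap3 G b z₀‖ + frob G * (2 * r) :=
          norm_affineMap3_le_of_mem_ball G b hz (hE hz₀)
      _ ≤ δ⁻¹ * r⁻¹ ^ 3 * √V * √Q + 32 / δ ^ 2 * r⁻¹ ^ 4 * √V * √Q * (2 * r) := by gcongr
      _ = (64 / δ ^ 2 + 1 / δ) * r⁻¹ ^ 3 * √V * √Q := by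
          field_simp
          ring
  · gcongr
    exact le_add_of_le_of_nonneg (by gcongr; norm_num) (by positivity)
end
end
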